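/- arXiv:2604.04328 — 2 statements merged into one kernel-verified Lean document; each statement's English description precedes it below -/
import Mathlib

section
/- (Soft cover convergence) Let P be a probabilistic tournament on n agents satisfying the margin assumption with margin δ > 0, and let T be its hard majority tournament. Then for every pair of distinct agents c, a: if c does not cover a in T, then lim_{τ→0⁺} cover_τ(c,a) = 0; and if c covers a in T, then lim_{τ→0⁺} cover_τ(c,a) exists and is at least 1. -/
open Filter Topology

/-- The logistic sigmoid. -/
noncomputable def sigmoid (z : ℝ) : ℝ := 1 / (1 + Real.exp (-z))

/-- Soft majority edge matrix `D_τ`. -/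
noncomputable def softEdge {n : ℕ} (P : Matrix (Fin n) (Fin n) ℝ) (τ : ℝ) :
    Matrix (Fin n) (Fin n) ℝ := fun a b => sigmoid ((P a b - 1/2) / τ)

/-- 0/1 adjacency matrix of the hard majority tournament. -/
noncomputable def hardAdj {n : ℕ} (P : Matrix (Fin n) (Fin n) ℝ) : Matrix (Fin n) (Fin n) ℝ :=
  fun a b => if 1/2 < P a b then 1 else 0

/-- Soft reachability matrix `R_τ = Σ_{k=1}^K D_τ^k`. -/
noncomputable def softReach {n : ℕ} (P : Matrix (Fin n) (Fin n) ℝ) (τ : ℝ) (K : ℕ) :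
    Matrix (Fin n) (Fin n) ℝ := ∑ k ∈ Finset.Icc 1 K, softEdge P τ ^ k

/-- softmin over a finite family. -/
noncomputable def softmin {ι : Type*} (τ : ℝ) (s : Finset ι) (f : ι → ℝ) : ℝ :=
  -τ * Real.log (∑ i ∈ s, Real.exp (-(f i) / τ))

/-- scalar soft maximum over a finite family. -/
noncomputable def smax {ι : Type*} (τ : ℝ) (s : Finset ι) (f : ι → ℝ) : ℝ :=
  τ * Real.log (∑ i ∈ s, Real.exp (f i / τ))

/-- Soft Top-Cycle membership score `t_τ(a)`. -/
noncomputable def tcScore {n : ℕ} (P : Matrix (Fin n) (Fin n) ℝ) (τ : ℝ) (K : ℕ) (a : Fin n) : ℝ :=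
  softmin τ ({a}ᶜ : Finset (Fin n)) (fun b => softReach P τ K a b)

/-- Soft cover score `cover_τ(c, a)`. -/
noncomputable def coverScore {n : ℕ} (P : Matrix (Fin n) (Fin n) ℝ) (τ : ℝ) (c a : Fin n) : ℝ :=
  softEdge P τ c a *
    (1 - smax τ (Finset.univ : Finset (Fin n)) (fun b => softEdge P τ a b - softEdge P τ c b))

/-- Soft Uncovered-Set membership score `u_τ(a)`. -/
noncomputable def ucScore {n : ℕ} (P : Matrix (Fin n) (Fin n) ℝ) (τ : ℝ) (a : Fin n) : ℝ :=
  1 - smax τ ({a}ᶜ : Finset (Fin n)) (fun c => coverScore P τ c a)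

/-- `a ≻ b` in the hard majority tournament. -/
def beats {n : ℕ} (P : Matrix (Fin n) (Fin n) ℝ) (a b : Fin n) : Prop := 1/2 < P a b

/-- `a` reaches `b` via a directed path in the hard majority tournament. -/
def reaches {n : ℕ} (P : Matrix (Fin n) (Fin n) ℝ) : Fin n → Fin n → Prop :=
  Relation.TransGen (beats P)

/-- `c` covers `a` in the hard majority tournament. -/
def covers {n : ℕ} (P : Matrix (Fin n) (Fin n) ℝ) (c a : Fin n) : Prop :=
  beats P c a ∧ ∀ b, beats P a b → beats P c b

/-- membership in the Top Cycle of the hard majority tournament. -/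
def inTopCycle {n : ℕ} (P : Matrix (Fin n) (Fin n) ℝ) (a : Fin n) : Prop :=
  ∀ b, b ≠ a → reaches P a b

/-- membership in the Uncovered Set of the hard majority tournament. -/
def inUncovered {n : ℕ} (P : Matrix (Fin n) (Fin n) ℝ) (a : Fin n) : Prop :=
  ∀ c, c ≠ a → ¬ covers P c a

/-- `P` is a probabilistic tournament. -/
def IsProbTournament {n : ℕ} (P : Matrix (Fin n) (Fin n) ℝ) : Prop :=
  (∀ a b, 0 ≤ P a b ∧ P a b ≤ 1) ∧ (∀ a b, P a b + P b a = 1) ∧ ∀ a, P a a = 1/2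

/-- margin assumption with margin `δ`. -/
def HasMargin {n : ℕ} (P : Matrix (Fin n) (Fin n) ℝ) (δ : ℝ) : Prop :=
  ∀ a b, a ≠ b → δ ≤ |P a b - 1/2|

lemma le_smax_aux {ι : Type*} {τ : ℝ} (hτ : 0 < τ) (s : Finset ι) (f : ι → ℝ) {b : ι}
    (hb : b ∈ s) : f b ≤ smax τ s f := by
  have h1 : Real.exp (f b / τ) ≤ ∑ i ∈ s, Real.exp (f i / τ) :=
    Finset.single_le_sum (f := fun i => Real.exp (f i / τ)) (fun i _ => (Real.exp_pos _).le) hb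
  have h2 := Real.log_le_log (Real.exp_pos _) h1
  rw [Real.log_exp] at h2
  have := mul_le_mul_of_nonneg_left h2 hτ.le
  calc f b = τ * (f b / τ) := by field_simp
  _ ≤ _ := this

lemma smax_le_aux {ι : Type*} {τ : ℝ} (hτ : 0 < τ) {s : Finset ι} (hs : s.Nonempty)
    {f : ι → ℝ} {m : ℝ} (hm : ∀ i ∈ s, f i ≤ m) :
    smax τ s f ≤ τ * Real.log s.card + m := by
  have hsum : ∑ i ∈ s, Real.exp (f i / τ) ≤ (s.card : ℝ) * Real.exp (m / τ) := by
    have := Finset.sum_le_card_nsmul s (fun i => Real.exp (f i / τ)) (Real.exp (m / τ))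
      (fun i hi => Real.exp_le_exp.2 ((div_le_div_iff_of_pos_right hτ).2 (hm i hi)))
    simpa [nsmul_eq_mul] using this
  have hpos : (0:ℝ) < ∑ i ∈ s, Real.exp (f i / τ) :=
    Finset.sum_pos (fun i _ => Real.exp_pos _) hs
  have hlog := Real.log_le_log hpos hsum
  rw [Real.log_mul (by exact_mod_cast hs.card_pos.ne') (Real.exp_ne_zero _),
    Real.log_exp] at hlog
  have := mul_le_mul_of_nonneg_left hlog hτ.le
  calc smax τ s f ≤ τ * (Real.log s.card + m / τ) := this
  _ = τ * Real.log s.card + m := by field_simp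

lemma tendsto_smax_of_tendsto {ι : Type*} (s : Finset ι) (hs : s.Nonempty)
    (f : ℝ → ι → ℝ) (g : ι → ℝ)
    (hf : ∀ i ∈ s, Tendsto (fun τ => f τ i) (𝓝[>](0:ℝ)) (𝓝 (g i))) :
    Tendsto (fun τ => smax τ s (f τ)) (𝓝[>](0:ℝ)) (𝓝 (s.sup' hs g)) := by
  rw [tendsto_order]
  constructor
  · intro x hx
    obtain ⟨b, hb, hgb⟩ := Finset.exists_mem_eq_sup' hs g
    have h1 : ∀ᶠ τ in 𝓝[>](0:ℝ), x < f τ b :=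
      (hf b hb).eventually (eventually_gt_nhds (hgb ▸ hx))
    filter_upwards [h1, self_mem_nhdsWithin] with τ h1 hτ
    exact lt_of_lt_of_le h1 (le_smax_aux hτ s (f τ) hb)
  · intro x hx
    set M := s.sup' hs g with hM
    set ε := (x - M) / 3 with hε
    have hεpos : 0 < ε := by simp [hε]; linarith
    have h1 : ∀ᶠ τ in 𝓝[>](0:ℝ), ∀ i ∈ s, f τ i < M + ε := by
      rw [Finset.eventually_all]
      intro i hi
      exact (hf i hi).eventually (eventually_lt_nhds
        (lt_of_le_of_lt (Finset.le_sup' g hi) (by linarith)))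
    have h2 : Tendsto (fun τ : ℝ => τ * Real.log s.card) (𝓝[>](0:ℝ)) (𝓝 0) := by
      have h := (continuous_id.mul (continuous_const (y := Real.log s.card))).tendsto (0:ℝ)
      have := h.mono_left (nhdsWithin_le_nhds (s := Set.Ioi 0))
      simpa [Pi.mul_def] using this
    have h3 : ∀ᶠ τ in 𝓝[>](0:ℝ), τ * Real.log s.card < ε :=
      h2.eventually (eventually_lt_nhds hεpos)
    filter_upwards [h1, h3, self_mem_nhdsWithin] with τ h1 h3 hτ
    have := smax_le_aux hτ hs (fun i hi => (h1 i hi).le)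
    have : smax τ s (f τ) ≤ τ * Real.log s.card + (M + ε) := this
    have hx' : x = M + 3 * ε := by simp [hε]; ring
    linarith

lemma sigmoid_tendsto_one {r : ℝ} (hr : 0 < r) :
    Tendsto (fun τ => sigmoid (r / τ)) (𝓝[>](0:ℝ)) (𝓝 1) := by
  have h1 : Tendsto (fun τ : ℝ => r / τ) (𝓝[>](0:ℝ)) atTop := by
    simpa [div_eq_mul_inv] using tendsto_inv_nhdsGT_zero.const_mul_atTop hr
  have h2 : Tendsto (fun τ : ℝ => Real.exp (-(r / τ))) (𝓝[>](0:ℝ)) (𝓝 0) :=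
    Real.tendsto_exp_atBot.comp (tendsto_neg_atTop_atBot.comp h1)
  have h3 : Tendsto (fun τ : ℝ => 1 / (1 + Real.exp (-(r / τ)))) (𝓝[>](0:ℝ)) (𝓝 1) := by
    have := (tendsto_const_nhds (x := (1:ℝ)).add h2).inv₀ (by norm_num)
    simpa [one_div] using this
  simpa [sigmoid] using h3

lemma sigmoid_tendsto_zero {r : ℝ} (hr : r < 0) :
    Tendsto (fun τ => sigmoid (r / τ)) (𝓝[>](0:ℝ)) (𝓝 0) := by
  have h1 : Tendsto (fun τ : ℝ => -(r / τ)) (𝓝[>](0:ℝ)) atTop := by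
    have : Tendsto (fun τ : ℝ => (-r) / τ) (𝓝[>](0:ℝ)) atTop := by
      simpa [div_eq_mul_inv] using tendsto_inv_nhdsGT_zero.const_mul_atTop (by linarith : 0 < -r)
    simpa [neg_div] using this
  have h2 : Tendsto (fun τ : ℝ => 1 + Real.exp (-(r / τ))) (𝓝[>](0:ℝ)) atTop :=
    tendsto_atTop_add_const_left _ 1 (Real.tendsto_exp_atTop.comp h1)
  have h3 := tendsto_inv_atTop_zero.comp h2
  simpa [sigmoid, one_div, Function.comp_def] using h3

noncomputable def edgeLim {n : ℕ} (P : Matrix (Fin n) (Fin n) ℝ) (x y : Fin n) : ℝ :=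
  if x = y then 1/2 else hardAdj P x y

lemma hardAdj_eq_one {n : ℕ} {P : Matrix (Fin n) (Fin n) ℝ} {x y : Fin n}
    (h : beats P x y) : hardAdj P x y = 1 := if_pos h

lemma hardAdj_eq_zero {n : ℕ} {P : Matrix (Fin n) (Fin n) ℝ} {x y : Fin n}
    (h : ¬ beats P x y) : hardAdj P x y = 0 := if_neg h

lemma edgeLim_ne {n : ℕ} {P : Matrix (Fin n) (Fin n) ℝ} {x y : Fin n}
    (h : x ≠ y) : edgeLim P x y = hardAdj P x y := if_neg h

lemma edgeLim_self {n : ℕ} {P : Matrix (Fin n) (Fin n) ℝ} (x : Fin n) :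
    edgeLim P x x = 1/2 := if_pos rfl

lemma not_beats_of_beats {n : ℕ} {P : Matrix (Fin n) (Fin n) ℝ} {x y : Fin n}
    (hP : IsProbTournament P) (h : beats P x y) : ¬ beats P y x := by
  have := hP.2.1 x y
  unfold beats at *
  intro h'; linarith

lemma softEdge_tendsto {n : ℕ} {P : Matrix (Fin n) (Fin n) ℝ} {δ : ℝ} (hδ : 0 < δ)
    (hP : IsProbTournament P) (hmargin : HasMargin P δ) (x y : Fin n) :
    Tendsto (fun τ => softEdge P τ x y) (𝓝[>](0:ℝ)) (𝓝 (edgeLim P x y)) := by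
  by_cases hxy : x = y
  · subst hxy
    have hd : P x x = 1/2 := hP.2.2 x
    have h : ∀ τ : ℝ, softEdge P τ x x = 1/2 := by
      intro τ; simp [softEdge, hd, sigmoid, Real.exp_zero]; norm_num
    simp only [h, edgeLim_self]
    exact tendsto_const_nhds
  · have hne : P x y - 1/2 ≠ 0 := by
      have := hmargin x y hxy
      intro h; rw [h] at this; simp at this; linarith
    rw [edgeLim_ne hxy]
    by_cases hb : beats P x y
    · rw [hardAdj_eq_one hb]
      exact sigmoid_tendsto_one (by unfold beats at hb; linarith : (0:ℝ) < P x y - 1/2)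
    · rw [hardAdj_eq_zero hb]
      have h1 : P x y ≤ 1/2 := not_lt.1 hb
      have : P x y - 1/2 < 0 := lt_of_le_of_ne (by linarith) hne
      exact sigmoid_tendsto_zero this


/-- soft cover convergence in the zero-temperature limit. -/
theorem soft_cover_convergence {n : ℕ} (hn : 2 ≤ n) (P : Matrix (Fin n) (Fin n) ℝ)
    (δ : ℝ) (hδ : 0 < δ) (hP : IsProbTournament P) (hmargin : HasMargin P δ)
    (c a : Fin n) (hca : c ≠ a) :
    (¬ covers P c a →
      Tendsto (fun τ : ℝ => coverScore P τ c a) (𝓝[>] (0:ℝ)) (𝓝 0)) ∧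
    (covers P c a →
      ∃ L : ℝ, 1 ≤ L ∧
        Tendsto (fun τ : ℝ => coverScore P τ c a) (𝓝[>] (0:ℝ)) (𝓝 L)) := by
  haveI : NeZero n := ⟨by omega⟩
  have hne : (Finset.univ : Finset (Fin n)).Nonempty := Finset.univ_nonempty
  set g : Fin n → ℝ := fun b => edgeLim P a b - edgeLim P c b with hg
  have hsmax : Tendsto
      (fun τ => smax τ (Finset.univ : Finset (Fin n))
        (fun b => softEdge P τ a b - softEdge P τ c b)) (𝓝[>](0:ℝ))
      (𝓝 (Finset.univ.sup' hne g)) :=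
    tendsto_smax_of_tendsto _ hne _ g
      (fun b _ => (softEdge_tendsto hδ hP hmargin a b).sub (softEdge_tendsto hδ hP hmargin c b))
  have hedge : Tendsto (fun τ => softEdge P τ c a) (𝓝[>](0:ℝ)) (𝓝 (edgeLim P c a)) :=
    softEdge_tendsto hδ hP hmargin c a
  have hmain : Tendsto (fun τ : ℝ => coverScore P τ c a) (𝓝[>](0:ℝ))
      (𝓝 (edgeLim P c a * (1 - Finset.univ.sup' hne g))) :=
    hedge.mul (tendsto_const_nhds.sub hsmax)
  have hEL01 : ∀ x y : Fin n, 0 ≤ edgeLim P x y ∧ edgeLim P x y ≤ 1 := by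
    intro x y
    unfold edgeLim hardAdj
    split_ifs <;> norm_num
  have hsum := hP.2.1
  constructor
  · intro hnc
    by_cases hb : beats P c a
    · have hwit : ∃ b, beats P a b ∧ ¬ beats P c b := by
        by_contra h
        push_neg at h
        exact hnc ⟨hb, h⟩
      obtain ⟨b, hab, hcb⟩ := hwit
      have hab' : a ≠ b := by
        intro h; subst h
        unfold beats at hab; rw [hP.2.2] at hab; exact lt_irrefl _ hab
      have hcb' : c ≠ b := by
        intro h; subst h
        exact not_beats_of_beats hP hb hab
      have hgb : g b = 1 := by
        show edgeLim P a b - edgeLim P c b = 1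
        rw [edgeLim_ne hab', edgeLim_ne hcb', hardAdj_eq_one hab, hardAdj_eq_zero hcb]
        ring
      have hsup : Finset.univ.sup' hne g = 1 := by
        apply le_antisymm
        · apply Finset.sup'_le
          intro i _
          have h1 := hEL01 a i
          have h2 := hEL01 c i
          show edgeLim P a i - edgeLim P c i ≤ 1
          linarith [h1.2, h2.1]
        · rw [← hgb]; exact Finset.le_sup' g (Finset.mem_univ b)
      rw [hsup] at hmain
      simpa using hmain
    · have h0 : edgeLim P c a = 0 := by
        rw [edgeLim_ne hca, hardAdj_eq_zero hb]
      rw [h0] at hmain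
      simpa using hmain
  · intro hc
    refine ⟨edgeLim P c a * (1 - Finset.univ.sup' hne g), ?_, hmain⟩
    have hea : edgeLim P c a = 1 := by
      rw [edgeLim_ne hca, hardAdj_eq_one hc.1]
    have hM : Finset.univ.sup' hne g ≤ 0 := by
      apply Finset.sup'_le
      intro b _
      show edgeLim P a b - edgeLim P c b ≤ 0
      by_cases hba : a = b
      · subst hba
        rw [edgeLim_self, hea]; norm_num
      · by_cases hbc : c = b
        · subst hbc
          have hac : ¬ beats P a c := not_beats_of_beats hP hc.1
          rw [edgeLim_ne hba, hardAdj_eq_zero hac, edgeLim_self]; norm_num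
        · by_cases hab : beats P a b
          · have hcb := hc.2 b hab
            rw [edgeLim_ne hba, edgeLim_ne hbc, hardAdj_eq_one hab, hardAdj_eq_one hcb]
            norm_num
          · have h2 := (hEL01 c b).1
            rw [edgeLim_ne hba, hardAdj_eq_zero hab]
            linarith
    rw [hea]
    nlinarith [hM]
end

section
/- (Uncovered Set consistency) Let P be a probabilistic tournament on n agents satisfying the margin assumption with margin δ > 0, and let T be its hard majority tournament. Then for every agent a the limit lim_{τ→0⁺} u_τ(a) exists; it equals 1 if a belongs to the Uncovered Set UC(T), and it is at most 0 if a does not belong to UC(T). Consequently, for all sufficiently small τ > 0, u_τ(a) > 1/2 if and only if a ∈ UC(T). -/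
open Filter Topology

/-!
As `τ → 0⁺`, `D_τ(a, b) = σ((P_{ab} - 1/2)/τ)` tends to the Heaviside value `E(a, b)` of
`P_{ab} - 1/2` (with `1/2` at `0`), and `smax_τ` over `m` terms lies between the maximum and
the maximum plus `τ log m`, so it tends to the maximum. Hence `cover_τ(c, a)` tends to
`E(c, a) (1 - max_b (E(a, b) - E(c, b)))`. Under the margin assumption `E` is the adjacency
matrix of `T` with `1/2` on the diagonal. If `c` does not cover `a`, this limit is `0`: either
`E(c, a) = 0`, or some `b` with `a ≻ b`, `c ⊁ b` gives `E(a, b) - E(c, b) = 1`, the largest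
possible value. If `c` covers `a`, then `E(a, ·) ≤ E(c, ·)` and the limit is at least `1`.
So `u_τ(a)` tends to `1` on `UC(T)` and to a value `≤ 0` off it.
-/

open Finset

section SoftMax

variable {ι : Type*} {τ : ℝ} {s : Finset ι}

lemma smax_empty (τ : ℝ) (f : ι → ℝ) : smax τ ∅ f = 0 := by
  simp [smax]

lemma le_smax (hτ : 0 < τ) (f : ι → ℝ) {i : ι} (hi : i ∈ s) : f i ≤ smax τ s f := by
  have hpos : 0 < ∑ j ∈ s, Real.exp (f j / τ) := sum_pos (fun j _ => Real.exp_pos _) ⟨i, hi⟩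
  rw [smax, ← div_le_iff₀' hτ, Real.le_log_iff_exp_le hpos]
  exact single_le_sum (f := fun j => Real.exp (f j / τ)) (fun j _ => (Real.exp_pos _).le) hi

lemma smax_le_sup'_add (hτ : 0 < τ) (hs : s.Nonempty) (f : ι → ℝ) :
    smax τ s f ≤ s.sup' hs f + τ * Real.log #s := by
  have hcard : (0 : ℝ) < #s := by exact_mod_cast hs.card_pos
  have hpos : 0 < ∑ j ∈ s, Real.exp (f j / τ) := sum_pos (fun j _ => Real.exp_pos _) hs
  have hsum : ∑ j ∈ s, Real.exp (f j / τ) ≤ #s * Real.exp (s.sup' hs f / τ) := by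
    rw [← nsmul_eq_mul, ← sum_const]
    exact sum_le_sum fun j hj =>
      Real.exp_le_exp.mpr (div_le_div_of_nonneg_right (le_sup' f hj) hτ.le)
  calc smax τ s f ≤ τ * (s.sup' hs f / τ + Real.log #s) := by
        rw [smax]
        gcongr
        rw [Real.log_le_iff_le_exp hpos, Real.exp_add, Real.exp_log hcard, mul_comm]
        exact hsum
    _ = s.sup' hs f + τ * Real.log #s := by field_simp

lemma tendsto_smax_nhdsGT_zero (hs : s.Nonempty) {g : ℝ → ι → ℝ} {L : ι → ℝ}
    (hg : ∀ i ∈ s, Tendsto (fun τ => g τ i) (𝓝[>] 0) (𝓝 (L i))) :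
    Tendsto (fun τ => smax τ s (g τ)) (𝓝[>] 0) (𝓝 (s.sup' hs L)) := by
  have hsup : Tendsto (fun τ => s.sup' hs (g τ)) (𝓝[>] 0) (𝓝 (s.sup' hs L)) :=
    Tendsto.finset_sup'_nhds_apply hs hg
  have herr : Tendsto (fun τ : ℝ => τ * Real.log #s) (𝓝[>] 0) (𝓝 0) :=
    tendsto_nhdsWithin_of_tendsto_nhds <| by
      simpa using (continuous_mul_const (Real.log #s)).tendsto 0
  refine tendsto_of_tendsto_of_tendsto_of_le_of_le' hsup (by simpa using hsup.add herr) ?_ ?_ <;>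
    filter_upwards [self_mem_nhdsWithin] with τ hτ
  · exact sup'_le hs _ fun i hi => le_smax hτ _ hi
  · exact smax_le_sup'_add hτ hs _

end SoftMax

lemma sigmoid_eq_real_sigmoid : sigmoid = Real.sigmoid :=
  funext fun _ => one_div _

noncomputable def heaviside (x : ℝ) : ℝ :=
  if 0 < x then 1 else if x < 0 then 0 else 1/2

lemma heaviside_nonneg (x : ℝ) : 0 ≤ heaviside x := by
  unfold heaviside; split_ifs <;> norm_num

lemma heaviside_le_one (x : ℝ) : heaviside x ≤ 1 := by
  unfold heaviside; split_ifs <;> norm_num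

lemma tendsto_sigmoid_div_nhdsGT_zero (x : ℝ) :
    Tendsto (fun τ => sigmoid (x / τ)) (𝓝[>] 0) (𝓝 (heaviside x)) := by
  simp only [sigmoid_eq_real_sigmoid, div_eq_mul_inv]
  rcases lt_trichotomy x 0 with hx | rfl | hx
  · rw [heaviside, if_neg hx.not_gt, if_pos hx]
    exact Real.tendsto_sigmoid_atBot.comp (tendsto_inv_nhdsGT_zero.const_mul_atTop_of_neg hx)
  · simp [heaviside, Real.sigmoid_zero]
  · rw [heaviside, if_pos hx]
    exact Real.tendsto_sigmoid_atTop.comp (tendsto_inv_nhdsGT_zero.const_mul_atTop hx)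

section Tournament

variable {n : ℕ} {P : Matrix (Fin n) (Fin n) ℝ} {δ : ℝ} {a b c : Fin n}

noncomputable def limEdge (P : Matrix (Fin n) (Fin n) ℝ) (a b : Fin n) : ℝ :=
  heaviside (P a b - 1/2)

lemma tendsto_softEdge (P : Matrix (Fin n) (Fin n) ℝ) (a b : Fin n) :
    Tendsto (fun τ => softEdge P τ a b) (𝓝[>] 0) (𝓝 (limEdge P a b)) :=
  tendsto_sigmoid_div_nhdsGT_zero _

lemma limEdge_nonneg (P : Matrix (Fin n) (Fin n) ℝ) (a b : Fin n) : 0 ≤ limEdge P a b :=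
  heaviside_nonneg _

lemma limEdge_le_one (P : Matrix (Fin n) (Fin n) ℝ) (a b : Fin n) : limEdge P a b ≤ 1 :=
  heaviside_le_one _

lemma limEdge_self (hP : IsProbTournament P) (a : Fin n) : limEdge P a a = 1/2 := by
  simp [limEdge, heaviside, hP.2.2 a]

lemma limEdge_of_beats (h : beats P a b) : limEdge P a b = 1 := by
  rw [limEdge, heaviside, if_pos (sub_pos.2 h)]

lemma limEdge_of_not_beats (hδ : 0 < δ) (hmargin : HasMargin P δ) (hab : a ≠ b)
    (h : ¬ beats P a b) : limEdge P a b = 0 := by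
  have hlt : P a b - 1/2 < 0 := by
    have hm := hmargin a b hab
    rw [beats, not_lt] at h
    rw [abs_of_nonpos (by linarith)] at hm
    linarith
  rw [limEdge, heaviside, if_neg hlt.not_gt, if_pos hlt]

lemma beats_asymm (hP : IsProbTournament P) (h : beats P a b) : ¬ beats P b a := by
  have := hP.2.1 a b
  unfold beats at *
  linarith

noncomputable def limCover (P : Matrix (Fin n) (Fin n) ℝ) (c a : Fin n) : ℝ :=
  limEdge P c a * (1 - univ.sup' ⟨a, mem_univ a⟩ fun b => limEdge P a b - limEdge P c b)

lemma tendsto_coverScore (P : Matrix (Fin n) (Fin n) ℝ) (c a : Fin n) :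
    Tendsto (fun τ => coverScore P τ c a) (𝓝[>] 0) (𝓝 (limCover P c a)) :=
  (tendsto_softEdge P c a).mul <| tendsto_const_nhds.sub <| tendsto_smax_nhdsGT_zero _
    fun b _ => (tendsto_softEdge P a b).sub (tendsto_softEdge P c b)

lemma limCover_eq_zero_of_not_covers (hP : IsProbTournament P) (hδ : 0 < δ)
    (hmargin : HasMargin P δ) (hca : c ≠ a) (h : ¬ covers P c a) : limCover P c a = 0 := by
  by_cases hc : beats P c a
  · obtain ⟨b, hab, hcb⟩ : ∃ b, beats P a b ∧ ¬ beats P c b := by simpa [covers, hc] using h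
    have hcb' : c ≠ b := by rintro rfl; exact beats_asymm hP hc hab
    have hsup : univ.sup' ⟨a, mem_univ a⟩ (fun b => limEdge P a b - limEdge P c b) = 1 := by
      refine le_antisymm (sup'_le _ _ fun d _ => ?_) (le_sup'_of_le _ (mem_univ b) ?_)
      · linarith [limEdge_le_one P a d, limEdge_nonneg P c d]
      · rw [limEdge_of_beats hab, limEdge_of_not_beats hδ hmargin hcb' hcb]
        norm_num
    simp [limCover, hsup]
  · simp [limCover, limEdge_of_not_beats hδ hmargin hca hc]

lemma limEdge_le_of_covers (hP : IsProbTournament P) (hδ : 0 < δ) (hmargin : HasMargin P δ)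
    (h : covers P c a) (b : Fin n) : limEdge P a b ≤ limEdge P c b := by
  by_cases hab : beats P a b
  · rw [limEdge_of_beats hab, limEdge_of_beats (h.2 b hab)]
  rcases eq_or_ne a b with rfl | hne
  · rw [limEdge_self hP, limEdge_of_beats h.1]
    norm_num
  · rw [limEdge_of_not_beats hδ hmargin hne hab]
    exact limEdge_nonneg P c b

lemma one_le_limCover_of_covers (hP : IsProbTournament P) (hδ : 0 < δ)
    (hmargin : HasMargin P δ) (h : covers P c a) : 1 ≤ limCover P c a := by
  have hsup : univ.sup' ⟨a, mem_univ a⟩ (fun b => limEdge P a b - limEdge P c b) ≤ 0 :=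
    sup'_le _ _ fun b _ => sub_nonpos.2 (limEdge_le_of_covers hP hδ hmargin h b)
  rw [limCover, limEdge_of_beats h.1]
  linarith

theorem exists_tendsto_ucScore (hP : IsProbTournament P) (hδ : 0 < δ)
    (hmargin : HasMargin P δ) (a : Fin n) :
    ∃ L : ℝ, Tendsto (fun τ : ℝ => ucScore P τ a) (𝓝[>] 0) (𝓝 L) ∧
      (inUncovered P a → L = 1) ∧ (¬ inUncovered P a → L ≤ 0) := by
  rcases ({a}ᶜ : Finset (Fin n)).eq_empty_or_nonempty with hs | hs
  · have hu : inUncovered P a := fun c hca => by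
      simpa [hs] using mem_compl.2 (notMem_singleton.2 hca)
    refine ⟨1, ?_, fun _ => rfl, fun h => absurd hu h⟩
    simp only [ucScore, hs, smax_empty, sub_zero]
    exact tendsto_const_nhds
  refine ⟨1 - ({a}ᶜ : Finset (Fin n)).sup' hs fun c => limCover P c a,
    tendsto_const_nhds.sub (tendsto_smax_nhdsGT_zero hs fun c _ => tendsto_coverScore P c a),
    fun hu => ?_, fun hu => ?_⟩
  · have hzero : ∀ c ∈ ({a}ᶜ : Finset (Fin n)), limCover P c a = 0 := fun c hc =>
      have hca : c ≠ a := by simpa using hc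
      limCover_eq_zero_of_not_covers hP hδ hmargin hca (hu c hca)
    rw [sup'_congr hs rfl hzero, sup'_const, sub_zero]
  · obtain ⟨c, hca, hc⟩ : ∃ c, c ≠ a ∧ covers P c a := by simpa [inUncovered] using hu
    have := le_sup'_of_le (fun c => limCover P c a) (s := {a}ᶜ) (by simpa using hca)
      (one_le_limCover_of_covers hP hδ hmargin hc)
    linarith

end Tournament

theorem uncovered_set_consistency_general {n : ℕ} (P : Matrix (Fin n) (Fin n) ℝ)
    (δ : ℝ) (hδ : 0 < δ) (hP : IsProbTournament P) (hmargin : HasMargin P δ)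
    (a : Fin n) :
    ∃ L : ℝ,
      Tendsto (fun τ : ℝ => ucScore P τ a) (𝓝[>] (0:ℝ)) (𝓝 L) ∧
      (inUncovered P a → L = 1) ∧
      (¬ inUncovered P a → L ≤ 0) ∧
      (∀ᶠ τ : ℝ in 𝓝[>] (0:ℝ), (1/2 < ucScore P τ a ↔ inUncovered P a)) := by
  obtain ⟨L, hL, hL_unc, hL_cov⟩ := exists_tendsto_ucScore hP hδ hmargin a
  refine ⟨L, hL, hL_unc, hL_cov, ?_⟩
  by_cases hu : inUncovered P a
  · filter_upwards [hL.eventually_const_lt (by rw [hL_unc hu]; norm_num : (1/2 : ℝ) < L)] with τ hτ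
    exact iff_of_true hτ hu
  · filter_upwards [hL.eventually_lt_const (by linarith [hL_cov hu] : L < 1/2)] with τ hτ
    exact iff_of_false hτ.not_gt hu

/-- Uncovered Set consistency of the soft Uncovered-Set score. -/
theorem uncovered_set_consistency {n : ℕ} (hn : 2 ≤ n) (P : Matrix (Fin n) (Fin n) ℝ)
    (δ : ℝ) (hδ : 0 < δ) (hP : IsProbTournament P) (hmargin : HasMargin P δ)
    (a : Fin n) :
    ∃ L : ℝ,
      Tendsto (fun τ : ℝ => ucScore P τ a) (𝓝[>] (0:ℝ)) (𝓝 L) ∧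
      (inUncovered P a → L = 1) ∧
      (¬ inUncovered P a → L ≤ 0) ∧
      (∀ᶠ τ : ℝ in 𝓝[>] (0:ℝ), (1/2 < ucScore P τ a ↔ inUncovered P a)) :=
  uncovered_set_consistency_general P δ hδ hP hmargin a
end
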